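/- Let φ ∈ 𝒜̄⁺₁, i.e. φ ∈ H¹(ℝ²) with S₁(φ) < S₁(Q₁) and P₁(φ) ≥ 0. Then I₁(φ) ≥ min{ 2(S₁(Q₁) − S₁(φ)), ∫ k₁(4π|φ|²) dx }, where k₁(s) = (1/(4π))((1/2)s²e^s − s e^s + e^s − 1). Moreover k₁(s) ≥ s³/(24π) for all s ≥ 0, so that ∫ k₁(4π|φ|²) dx ≥ (8π²/3)‖φ‖⁶_{L⁶}. -/

import Mathlib

open MeasureTheory Real Filter
open scoped Topology ENNReal

noncomputable section

abbrev E2 : Type := EuclideanSpace ℝ (Fin 2)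

/-- Squared `L²` norm. -/
def l2Sq (u : E2 → ℂ) : ℝ := ∫ x : E2, ‖u x‖ ^ 2

/-- Squared `L²` norm of the gradient. -/
def gradSq (u : E2 → ℂ) : ℝ := ∫ x : E2, ‖fderiv ℝ u x‖ ^ 2

/-- Membership in `H¹(ℝ²)`. -/
def MemH1 (u : E2 → ℂ) : Prop :=
  MemLp u 2 volume ∧ Differentiable ℝ u ∧ MemLp (fun x => fderiv ℝ u x) 2 volume

/-- Integrability of all exponentials `e^{a|u|²} - 1`. -/
def ExpIntegrable (u : E2 → ℂ) : Prop :=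
  ∀ a : ℝ, 0 < a → Integrable (fun x : E2 => Real.exp (a * ‖u x‖ ^ 2) - 1)

/-- The nonlinearity `f_μ`. -/
def fmu (μ : ℝ) (z : ℂ) : ℂ :=
  ((Real.exp (4 * π * ‖z‖ ^ 2) - 1 - 4 * π * μ * ‖z‖ ^ 2 : ℝ) : ℂ) * z

/-- The potential `F_μ`. -/
def Fmu (μ : ℝ) (z : ℂ) : ℝ :=
  (Real.exp (4 * π * ‖z‖ ^ 2) - 1 - 4 * π * ‖z‖ ^ 2 - 8 * π ^ 2 * μ * ‖z‖ ^ 4) / (8 * π)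

/-- `Re (z̄ f_μ(z))`. -/
def nlDensity (μ : ℝ) (z : ℂ) : ℝ :=
  (Real.exp (4 * π * ‖z‖ ^ 2) - 1 - 4 * π * μ * ‖z‖ ^ 2) * ‖z‖ ^ 2

/-- Energy. -/
def Emu (μ : ℝ) (u : E2 → ℂ) : ℝ := gradSq u / 2 - ∫ x : E2, Fmu μ (u x)

/-- Action. -/
def Smu (μ : ℝ) (u : E2 → ℂ) : ℝ := Emu μ u + l2Sq u / 2

/-- The functional `P_μ`. -/
def Pmu (μ : ℝ) (u : E2 → ℂ) : ℝ := l2Sq u / 2 - ∫ x : E2, Fmu μ (u x)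

/-- The virial functional `I_μ`. -/
def Imu (μ : ℝ) (u : E2 → ℂ) : ℝ :=
  gradSq u - ∫ x : E2, (nlDensity μ (u x) - 2 * Fmu μ (u x))

/-- Laplacian on `ℝ²` (sum of second directional derivatives). -/
def lap (v : E2 → ℂ) (x : E2) : ℂ :=
  ∑ i : Fin 2, fderiv ℝ (fun y => fderiv ℝ v y (EuclideanSpace.single i 1)) x
      (EuclideanSpace.single i 1)

/-- `φ` is a (pointwise) solution to the elliptic equation `-Δφ + φ = f_μ(φ)`. -/
def IsEllipticSolution (μ : ℝ) (φ : E2 → ℂ) : Prop :=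
  ∀ x, -lap φ x + φ x = fmu μ (φ x)

/-- Ground state for `-ΔQ + Q = f_μ(Q)`. -/
structure IsGroundState (μ : ℝ) (Q : E2 → ℂ) : Prop where
  mem : MemH1 Q
  expint : ExpIntegrable Q
  nonzero : ¬ Q =ᵐ[volume] (0 : E2 → ℂ)
  radial : ∀ x y : E2, ‖x‖ = ‖y‖ → Q x = Q y
  solves : IsEllipticSolution μ Q
  minimal : ∀ φ : E2 → ℂ, MemH1 φ → ExpIntegrable φ → ¬ φ =ᵐ[volume] (0 : E2 → ℂ) →
    IsEllipticSolution μ φ → Smu μ Q ≤ Smu μ φ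
  grad_pos : 0 < gradSq Q
  grad_lt_one : gradSq Q < 1

/-- The function `k₁(s) = (1/(4π))((1/2)s²eˢ - s eˢ + eˢ - 1)`. -/
def k1 (s : ℝ) : ℝ :=
  (1 / (4 * π)) * ((1 / 2) * s ^ 2 * Real.exp s - s * Real.exp s + Real.exp s - 1)

/-!
Rescale `φ` by the `L²`-preserving dilation `φ_r(x) = r φ(r x)`. With `t = 4π|φ|²`, every term of
`S₁(φ_r)`, `P₁(φ_r)` and `I₁(φ_r)` is `r²‖∇φ‖²`, `‖φ‖²`, or `r⁻² ∫ g(r² t)` for an explicit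
function `g` of one real variable, so two elementary inequalities between these functions integrate
to `S₁(φ_r) ≤ S₁(φ) + (r² - 1) I₁(φ) / 2` for `r ≥ 1` and `I₁(φ_{√2}) ≤ 2 I₁(φ) - 2 ∫ k₁(t)`.

If `I₁(φ) < 0`, the first bound pushes `P₁(φ_r) ≤ S₁(φ_r)` below zero for large `r`, so
`P₁(φ_r) = 0` for some `r ≥ 1` with `S₁(φ_r) ≤ S₁(φ) < S₁(Q₁)`, against the characterisation of
`S₁(Q₁)` through `P₁`. If `0 ≤ I₁(φ) < ∫ k₁(t)`, the second bound gives `I₁(φ_r) = 0` for some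
`r ∈ [1, √2]`, and then `S₁(Q₁) ≤ S₁(φ_r) ≤ S₁(φ) + I₁(φ) / 2`. The bound `k₁(s) ≥ s³/(24π)`
holds because `(8π k₁)'(s) = s² eˢ ≥ s²`.
-/

open Set

lemma le_of_hasDerivAt_nonneg {f f' : ℝ → ℝ} {a b : ℝ}
    (hf : ∀ x, HasDerivAt f (f' x) x) (hf' : ∀ x, a < x → 0 ≤ f' x) (hab : a ≤ b) :
    f a ≤ f b :=
  monotoneOn_of_hasDerivWithinAt_nonneg (convex_Ici a)
    (fun x _ => (hf x).continuousAt.continuousWithinAt) (fun x _ => (hf x).hasDerivWithinAt)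
    (fun x hx => hf' x (by simpa using hx)) self_mem_Ici hab hab

-- With `t = 4π|z|²`: `F₁(z) = redF t / (8π)` and `Re(z̄ f₁(z)) - 2 F₁(z) = redH t / (4π)`.
def redF (t : ℝ) : ℝ := exp t - 1 - t - t ^ 2 / 2

def redH (t : ℝ) : ℝ := t * exp t - exp t + 1 - t ^ 2 / 2

lemma hasDerivAt_redF (t : ℝ) : HasDerivAt redF (exp t - 1 - t) t := by
  have := (((hasDerivAt_exp t).sub_const 1).sub (hasDerivAt_id t)).sub
    ((hasDerivAt_pow 2 t).div_const 2)
  exact this.congr_deriv (by simp)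

lemma continuous_redF : Continuous redF := by unfold redF; fun_prop

lemma continuous_redH : Continuous redH := by unfold redH; fun_prop

lemma redF_nonneg {t : ℝ} (ht : 0 ≤ t) : 0 ≤ redF t := by
  have := quadratic_le_exp_of_nonneg ht
  unfold redF; linarith

lemma abs_redF_le {t : ℝ} (ht : 0 ≤ t) : |redF t| ≤ exp (1 * t) - 1 := by
  rw [abs_of_nonneg (redF_nonneg ht), one_mul]
  unfold redF; nlinarith

lemma redH_nonneg {t : ℝ} (ht : 0 ≤ t) : 0 ≤ redH t := by
  have hd : ∀ x, HasDerivAt redH (x * (exp x - 1)) x := fun x => by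
    have := ((((hasDerivAt_id x).mul (hasDerivAt_exp x)).sub (hasDerivAt_exp x)).add_const 1).sub
      ((hasDerivAt_pow 2 x).div_const 2)
    exact this.congr_deriv (by simp; ring)
  have := le_of_hasDerivAt_nonneg hd (fun x hx => mul_nonneg hx.le
    (by linarith [add_one_le_exp x])) ht
  simpa [redH] using this

lemma abs_redH_le {t : ℝ} (ht : 0 ≤ t) : |redH t| ≤ exp (2 * t) - 1 := by
  rw [abs_of_nonneg (redH_nonneg ht)]
  have h2 : exp (2 * t) = exp t ^ 2 := by rw [← exp_nat_mul]; norm_num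
  have := add_one_le_exp t
  have := exp_pos t
  unfold redH; rw [h2]; nlinarith

lemma eight_pi_mul_k1 (s : ℝ) :
    8 * π * k1 s = s ^ 2 * exp s - 2 * s * exp s + 2 * exp s - 2 := by
  unfold k1; field_simp; ring

lemma cube_div_le_k1 {s : ℝ} (hs : 0 ≤ s) : s ^ 3 / (24 * π) ≤ k1 s := by
  have hd : ∀ x, HasDerivAt (fun x => x ^ 2 * exp x - 2 * x * exp x + 2 * exp x - 2 - x ^ 3 / 3)
      (x ^ 2 * (exp x - 1)) x := fun x => by
    have := (((((hasDerivAt_pow 2 x).mul (hasDerivAt_exp x)).sub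
      (((hasDerivAt_id x).const_mul 2).mul (hasDerivAt_exp x))).add
      ((hasDerivAt_exp x).const_mul 2)).sub_const 2).sub ((hasDerivAt_pow 3 x).div_const 3)
    exact this.congr_deriv (by simp; ring)
  have := le_of_hasDerivAt_nonneg hd (fun x _ => mul_nonneg (sq_nonneg x)
    (by linarith [add_one_le_exp x])) hs
  have hk := eight_pi_mul_k1 s
  simp only [exp_zero] at this
  rw [div_le_iff₀ (by positivity)]
  nlinarith [pi_pos]

lemma k1_nonneg {s : ℝ} (hs : 0 ≤ s) : 0 ≤ k1 s :=
  (by positivity : 0 ≤ s ^ 3 / (24 * π)).trans (cube_div_le_k1 hs)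

-- By `eight_pi_mul_k1` this reads `2t e^{2t} - e^{2t} + 1 ≥ 2t² eᵗ`, with equality at `t = 0`
-- and derivative of the difference `2t eᵗ (2(eᵗ - 1) - t) ≥ 0`.
lemma four_mul_redH_add_le_redH_two_mul {t : ℝ} (ht : 0 ≤ t) :
    4 * redH t + 16 * π * k1 t ≤ redH (2 * t) := by
  have hd : ∀ x, HasDerivAt (fun x => 2 * x * exp x ^ 2 - exp x ^ 2 + 1 - 2 * x ^ 2 * exp x)
      (2 * x * exp x * (2 * (exp x - 1) - x)) x := fun x => by
    have he := (hasDerivAt_exp x).pow 2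
    have := (((((hasDerivAt_id x).const_mul 2).mul he).sub he).add_const 1).sub
      (((hasDerivAt_pow 2 x).const_mul 2).mul (hasDerivAt_exp x))
    exact this.congr_deriv (by simp; ring)
  have := le_of_hasDerivAt_nonneg hd (fun x hx => mul_nonneg (by positivity)
    (by linarith [add_one_le_exp x])) ht
  have h2 : exp (2 * t) = exp t ^ 2 := by rw [← exp_nat_mul]; norm_num
  have hk := eight_pi_mul_k1 t
  simp only [exp_zero] at this
  unfold redH; rw [h2]; nlinarith

-- As a function of `c`, the difference of the two sides vanishes together with its derivative at
-- `c = 1`, and its second derivative `t²(e^{ct} - 1) - 2 redH t` is at least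
-- `t²(eᵗ - 1) - 2 redH t = 8π k₁(t) ≥ 0`.
lemma mul_redF_add_le_redF_mul {c t : ℝ} (hc : 1 ≤ c) (ht : 0 ≤ t) :
    c * redF t + c * (c - 1) * redH t ≤ redF (c * t) := by
  set G' : ℝ → ℝ := fun s => t * (exp (s * t) - 1 - s * t) - redF t - (2 * s - 1) * redH t
  have hG' : ∀ s, HasDerivAt G' (t ^ 2 * (exp (s * t) - 1) - 2 * redH t) s := fun s => by
    have hst := (hasDerivAt_id s).mul_const t
    have := ((((hst.exp.sub_const 1).sub hst).const_mul t).sub_const (redF t)).sub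
      ((((hasDerivAt_id s).const_mul 2).sub_const 1).mul_const (redH t))
    exact this.congr_deriv (by simp; ring)
  have hG'' : ∀ s, 1 < s → 0 ≤ t ^ 2 * (exp (s * t) - 1) - 2 * redH t := fun s hs => by
    have h1 : exp t ≤ exp (s * t) := exp_le_exp.2 (by nlinarith)
    have h2 := eight_pi_mul_k1 t
    have h3 := k1_nonneg ht
    unfold redH
    nlinarith [pi_pos, sq_nonneg t]
  have hG : ∀ s, HasDerivAt (fun s => redF (s * t) - s * redF t - s * (s - 1) * redH t)
      (G' s) s := fun s => by
    have := (((hasDerivAt_redF (s * t)).comp s ((hasDerivAt_id s).mul_const t)).sub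
      ((hasDerivAt_id s).mul_const (redF t))).sub
      ((((hasDerivAt_id s).mul ((hasDerivAt_id s).sub_const 1))).mul_const (redH t))
    exact this.congr_deriv (by simp [G']; ring)
  have hG'1 : G' 1 = 0 := by simp only [G', redF, redH, one_mul]; ring
  have := le_of_hasDerivAt_nonneg hG
    (fun s hs => hG'1 ▸ le_of_hasDerivAt_nonneg hG' hG'' hs.le) hc
  simp only [one_mul, sub_self, mul_zero, zero_mul] at this
  linarith

structure HasExpMoments {X : Type*} [MeasurableSpace X] (μ : Measure X) (T : X → ℝ) : Prop where
  aestronglyMeasurable : AEStronglyMeasurable T μ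
  nonneg : ∀ x, 0 ≤ T x
  integrable_exp_sub_one : ∀ a, 0 < a → Integrable (fun x => exp (a * T x) - 1) μ

namespace HasExpMoments

variable {X : Type*} [MeasurableSpace X] {μ : Measure X} {T : X → ℝ} {g : ℝ → ℝ} {b : ℝ}

lemma abs_comp_mul_le (hT : HasExpMoments μ T)
    (hgb : ∀ u, 0 ≤ u → |g u| ≤ exp (b * u) - 1) (hb : 0 < b) {c R : ℝ} (hc : 0 ≤ c)
    (hcR : c ≤ R) (x : X) : |g (c * T x)| ≤ exp (b * R * T x) - 1 := by
  have hx := hT.nonneg x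
  calc |g (c * T x)| ≤ exp (b * (c * T x)) - 1 := hgb _ (by positivity)
    _ ≤ exp (b * R * T x) - 1 := by
      gcongr exp ?_ - 1
      nlinarith [mul_nonneg (mul_nonneg hb.le (sub_nonneg.2 hcR)) hx]

lemma integrable_comp_mul (hT : HasExpMoments μ T) (hg : Continuous g)
    (hgb : ∀ u, 0 ≤ u → |g u| ≤ exp (b * u) - 1) (hb : 0 < b) {c : ℝ} (hc : 0 ≤ c) :
    Integrable (fun x => g (c * T x)) μ :=
  (hT.integrable_exp_sub_one _ (by positivity : 0 < b * (c + 1))).mono'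
    (hg.comp_aestronglyMeasurable (hT.aestronglyMeasurable.const_mul c))
    (.of_forall fun x => hT.abs_comp_mul_le hgb hb hc (le_add_of_nonneg_right zero_le_one) x)

lemma continuousOn_integral_comp_mul (hT : HasExpMoments μ T) (hg : Continuous g)
    (hgb : ∀ u, 0 ≤ u → |g u| ≤ exp (b * u) - 1) (hb : 0 < b) :
    ContinuousOn (fun c => ∫ x, g (c * T x) ∂μ) (Ici 0) := by
  intro c (hc : 0 ≤ c)
  have hcont : ContinuousOn (fun c => ∫ x, g (c * T x) ∂μ) (Icc 0 (c + 1)) :=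
    continuousOn_of_dominated
      (fun c' hc' => (hT.integrable_comp_mul hg hgb hb hc'.1).aestronglyMeasurable)
      (fun c' hc' => .of_forall fun x => hT.abs_comp_mul_le hgb hb hc'.1 hc'.2 x)
      (hT.integrable_exp_sub_one _ (by positivity))
      (.of_forall fun x => (hg.comp (continuous_id.mul continuous_const)).continuousOn)
  exact (hcont c ⟨hc, by linarith⟩).mono_of_mem_nhdsWithin
    (by simpa only [Ici_inter_Iic] using inter_mem_nhdsWithin (Ici 0) (Iic_mem_nhds (lt_add_one c)))

end HasExpMoments

lemma memLp_two_comp_smul {E F : Type*} [NormedAddCommGroup E] [NormedSpace ℝ E]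
    [MeasurableSpace E] [BorelSpace E] [FiniteDimensional ℝ E] {μ : Measure E}
    [μ.IsAddHaarMeasure] [NormedAddCommGroup F] {f : E → F} (hf : MemLp f 2 μ) {r : ℝ}
    (hr : r ≠ 0) : MemLp (fun x => f (r • x)) 2 μ := by
  have hm : AEStronglyMeasurable (fun x => f (r • x)) μ :=
    hf.aestronglyMeasurable.comp_quasiMeasurePreserving (Measure.quasiMeasurePreserving_smul μ hr)
  rw [memLp_two_iff_integrable_sq_norm hm]
  exact ((memLp_two_iff_integrable_sq_norm hf.1).1 hf).comp_smul hr

lemma integral_comp_smul_E2 (f : E2 → ℝ) (r : ℝ) :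
    ∫ x, f (r • x) = (r ^ 2)⁻¹ * ∫ x, f x := by
  rw [Measure.integral_comp_smul, finrank_euclideanSpace_fin, smul_eq_mul,
    abs_of_nonneg (by positivity)]

lemma norm_smul_sq {F : Type*} [NormedAddCommGroup F] [NormedSpace ℝ F] (r : ℝ) (z : F) :
    ‖r • z‖ ^ 2 = r ^ 2 * ‖z‖ ^ 2 := by
  rw [norm_smul, mul_pow, Real.norm_eq_abs, sq_abs]

def dilate (r : ℝ) (φ : E2 → ℂ) (x : E2) : ℂ := r • φ (r • x)

section Dilation

variable {φ : E2 → ℂ} {r : ℝ}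

@[simp]
lemma dilate_one (φ : E2 → ℂ) : dilate 1 φ = φ := by
  ext x; simp [dilate]

lemma hasFDerivAt_dilate (hφ : Differentiable ℝ φ) (x : E2) :
    HasFDerivAt (dilate r φ) (r ^ 2 • fderiv ℝ φ (r • x)) x := by
  have h : HasFDerivAt (dilate r φ)
      (r • (fderiv ℝ φ (r • x)).comp (r • ContinuousLinearMap.id ℝ E2)) x :=
    ((hφ (r • x)).hasFDerivAt.comp x ((hasFDerivAt_id x).const_smul r)).const_smul r
  exact h.congr_fderiv (by ext v; simp [smul_smul, pow_two])

lemma integral_comp_dilate (g : ℂ → ℝ) (r : ℝ) (φ : E2 → ℂ) :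
    ∫ x, g (dilate r φ x) = (r ^ 2)⁻¹ * ∫ x, g (r • φ x) :=
  integral_comp_smul_E2 (fun y => g (r • φ y)) r

lemma l2Sq_dilate (hr : r ≠ 0) : l2Sq (dilate r φ) = l2Sq φ := by
  simp only [l2Sq, integral_comp_dilate (fun z => ‖z‖ ^ 2), norm_smul_sq, integral_const_mul]
  field_simp

lemma gradSq_dilate (hφ : Differentiable ℝ φ) (hr : r ≠ 0) :
    gradSq (dilate r φ) = r ^ 2 * gradSq φ := by
  simp only [gradSq, fun x => (hasFDerivAt_dilate (r := r) hφ x).fderiv, norm_smul, mul_pow,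
    Real.norm_eq_abs, sq_abs]
  rw [integral_comp_smul_E2 (fun y => (r ^ 2) ^ 2 * ‖fderiv ℝ φ y‖ ^ 2), integral_const_mul]
  field_simp

lemma memH1_dilate (hφ : MemH1 φ) (hr : r ≠ 0) : MemH1 (dilate r φ) := by
  obtain ⟨hL2, hdiff, hgrad⟩ := hφ
  refine ⟨(memLp_two_comp_smul hL2 hr).const_smul r,
    fun x => (hasFDerivAt_dilate hdiff x).differentiableAt, ?_⟩
  simp only [fun x => (hasFDerivAt_dilate (r := r) hdiff x).fderiv]
  exact (memLp_two_comp_smul hgrad hr).const_smul (r ^ 2)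

lemma expIntegrable_dilate (hφ : ExpIntegrable φ) (hr : r ≠ 0) :
    ExpIntegrable (dilate r φ) := fun a ha =>
  ((hφ (a * r ^ 2) (by positivity)).comp_smul hr).congr <| .of_forall fun x => by
    simp only [dilate, norm_smul_sq, mul_assoc]

lemma not_ae_eq_zero_dilate (hφ : ¬φ =ᵐ[volume] 0) (hr : r ≠ 0) :
    ¬dilate r φ =ᵐ[volume] 0 := fun h => hφ <| by
  filter_upwards [(Measure.quasiMeasurePreserving_smul volume (inv_ne_zero hr)).ae_eq h]
    with y hy
  simpa [dilate, smul_smul, hr] using hy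

end Dilation

section Reduced

variable {φ : E2 → ℂ} {r c : ℝ}

lemma ExpIntegrable.hasExpMoments (hexp : ExpIntegrable φ) (hφ : Continuous φ) :
    HasExpMoments volume (fun x => 4 * π * ‖φ x‖ ^ 2) where
  aestronglyMeasurable := (by fun_prop : Continuous fun x => 4 * π * ‖φ x‖ ^ 2).aestronglyMeasurable
  nonneg x := by positivity
  integrable_exp_sub_one a ha := by
    simpa only [mul_assoc] using hexp (a * (4 * π)) (by positivity)

lemma integrable_redF (hφ : Continuous φ) (hexp : ExpIntegrable φ) (hc : 0 ≤ c) :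
    Integrable (fun x => redF (c * (4 * π * ‖φ x‖ ^ 2))) :=
  (hexp.hasExpMoments hφ).integrable_comp_mul continuous_redF (fun _ => abs_redF_le) one_pos hc

lemma integrable_redH (hφ : Continuous φ) (hexp : ExpIntegrable φ) (hc : 0 ≤ c) :
    Integrable (fun x => redH (c * (4 * π * ‖φ x‖ ^ 2))) :=
  (hexp.hasExpMoments hφ).integrable_comp_mul continuous_redH (fun _ => abs_redH_le) two_pos hc

lemma integrable_k1 (hφ : Continuous φ) (hexp : ExpIntegrable φ) :
    Integrable (fun x => k1 (4 * π * ‖φ x‖ ^ 2)) := by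
  refine ((integrable_redH hφ hexp zero_le_two).div_const (16 * π)).mono'
    ((by unfold k1; fun_prop : Continuous k1).comp (by fun_prop)).aestronglyMeasurable
    (.of_forall fun x => ?_)
  have ht : 0 ≤ 4 * π * ‖φ x‖ ^ 2 := by positivity
  have := four_mul_redH_add_le_redH_two_mul ht
  rw [Real.norm_eq_abs, abs_of_nonneg (k1_nonneg ht), le_div_iff₀ (by positivity)]
  nlinarith [redH_nonneg ht]

lemma Fmu_one_smul (r : ℝ) (z : ℂ) :
    Fmu 1 (r • z) = redF (r ^ 2 * (4 * π * ‖z‖ ^ 2)) / (8 * π) := by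
  simp only [Fmu, redF, show ‖r • z‖ ^ 4 = (‖r • z‖ ^ 2) ^ 2 by ring, norm_smul_sq,
    mul_left_comm (4 * π) (r ^ 2)]
  ring

lemma nlDensity_sub_Fmu_one_smul (r : ℝ) (z : ℂ) :
    nlDensity 1 (r • z) - 2 * Fmu 1 (r • z) = redH (r ^ 2 * (4 * π * ‖z‖ ^ 2)) / (4 * π) := by
  simp only [nlDensity, Fmu, redH, show ‖r • z‖ ^ 4 = (‖r • z‖ ^ 2) ^ 2 by ring, norm_smul_sq,
    mul_left_comm (4 * π) (r ^ 2)]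
  field_simp
  ring

lemma Smu_dilate (hφ : Differentiable ℝ φ) (hr : r ≠ 0) :
    Smu 1 (dilate r φ) = r ^ 2 * gradSq φ / 2 + l2Sq φ / 2 -
      (∫ x, redF (r ^ 2 * (4 * π * ‖φ x‖ ^ 2))) / (8 * π * r ^ 2) := by
  simp only [Smu, Emu, gradSq_dilate hφ hr, l2Sq_dilate hr, integral_comp_dilate (Fmu 1),
    Fmu_one_smul, integral_div]
  field_simp
  ring

lemma Pmu_dilate (hr : r ≠ 0) :
    Pmu 1 (dilate r φ) =
      l2Sq φ / 2 - (∫ x, redF (r ^ 2 * (4 * π * ‖φ x‖ ^ 2))) / (8 * π * r ^ 2) := by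
  simp only [Pmu, l2Sq_dilate hr, integral_comp_dilate (Fmu 1), Fmu_one_smul, integral_div]
  field_simp

lemma Imu_dilate (hφ : Differentiable ℝ φ) (hr : r ≠ 0) :
    Imu 1 (dilate r φ) =
      r ^ 2 * gradSq φ - (∫ x, redH (r ^ 2 * (4 * π * ‖φ x‖ ^ 2))) / (4 * π * r ^ 2) := by
  simp only [Imu, gradSq_dilate hφ hr,
    integral_comp_dilate (fun z => nlDensity 1 z - 2 * Fmu 1 z), nlDensity_sub_Fmu_one_smul,
    integral_div]
  field_simp

end Reduced

section Scaling

variable {φ : E2 → ℂ} {r : ℝ}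

lemma Smu_dilate_le (hφ : Differentiable ℝ φ) (hexp : ExpIntegrable φ) (hr : 1 ≤ r) :
    Smu 1 (dilate r φ) ≤ Smu 1 φ + (r ^ 2 - 1) * Imu 1 φ / 2 := by
  have hS := Smu_dilate hφ one_ne_zero
  have hI := Imu_dilate hφ one_ne_zero
  simp only [dilate_one, one_pow, one_mul, mul_one] at hS hI
  have hF := integrable_redF hφ.continuous hexp (zero_le_one' ℝ)
  have hH := integrable_redH hφ.continuous hexp (zero_le_one' ℝ)
  simp only [one_mul] at hF hH
  have key : r ^ 2 * (∫ x, redF (4 * π * ‖φ x‖ ^ 2)) +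
      r ^ 2 * (r ^ 2 - 1) * (∫ x, redH (4 * π * ‖φ x‖ ^ 2)) ≤
      ∫ x, redF (r ^ 2 * (4 * π * ‖φ x‖ ^ 2)) := by
    rw [← integral_const_mul, ← integral_const_mul, ← integral_add (hF.const_mul _) (hH.const_mul _)]
    exact integral_mono ((hF.const_mul _).add (hH.const_mul _))
      (integrable_redF hφ.continuous hexp (by positivity))
      fun x => mul_redF_add_le_redF_mul (one_le_pow₀ hr) (by positivity)
  rw [Smu_dilate hφ (by positivity), hS, hI]
  have hr2 : 0 < r ^ 2 := by positivity
  rw [← sub_nonneg]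
  have : 0 ≤ ((∫ x, redF (r ^ 2 * (4 * π * ‖φ x‖ ^ 2))) - (r ^ 2 * (∫ x, redF (4 * π * ‖φ x‖ ^ 2)) +
      r ^ 2 * (r ^ 2 - 1) * (∫ x, redH (4 * π * ‖φ x‖ ^ 2)))) / (8 * π * r ^ 2) :=
    div_nonneg (sub_nonneg.2 key) (by positivity)
  convert this using 1
  field_simp
  ring

lemma Imu_dilate_sqrt_two_le (hφ : Differentiable ℝ φ) (hexp : ExpIntegrable φ) :
    Imu 1 (dilate √2 φ) ≤ 2 * Imu 1 φ - 2 * ∫ x, k1 (4 * π * ‖φ x‖ ^ 2) := by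
  have hI := Imu_dilate hφ one_ne_zero
  simp only [dilate_one, one_pow, one_mul, mul_one] at hI
  have hH := integrable_redH hφ.continuous hexp (zero_le_one' ℝ)
  simp only [one_mul] at hH
  have hk := integrable_k1 hφ.continuous hexp
  have key : 4 * (∫ x, redH (4 * π * ‖φ x‖ ^ 2)) + 16 * π * (∫ x, k1 (4 * π * ‖φ x‖ ^ 2)) ≤
      ∫ x, redH (2 * (4 * π * ‖φ x‖ ^ 2)) := by
    rw [← integral_const_mul, ← integral_const_mul, ← integral_add (hH.const_mul _) (hk.const_mul _)]
    exact integral_mono ((hH.const_mul _).add (hk.const_mul _))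
      (integrable_redH hφ.continuous hexp zero_le_two)
      fun x => four_mul_redH_add_le_redH_two_mul (by positivity)
  rw [Imu_dilate hφ (by positivity), Real.sq_sqrt zero_le_two, hI]
  have hπ := pi_pos
  rw [← sub_nonneg]
  have : 0 ≤ ((∫ x, redH (2 * (4 * π * ‖φ x‖ ^ 2))) - (4 * (∫ x, redH (4 * π * ‖φ x‖ ^ 2)) +
      16 * π * (∫ x, k1 (4 * π * ‖φ x‖ ^ 2)))) / (8 * π) :=
    div_nonneg (sub_nonneg.2 key) (by positivity)
  convert this using 1
  field_simp
  ring

lemma continuousOn_Pmu_dilate (hφ : Continuous φ) (hexp : ExpIntegrable φ) :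
    ContinuousOn (fun r => Pmu 1 (dilate r φ)) (Ioi 0) := by
  have hJ := ((hexp.hasExpMoments hφ).continuousOn_integral_comp_mul continuous_redF
    (fun _ => abs_redF_le) one_pos).comp ((continuous_pow 2).continuousOn (s := Ioi 0))
    (fun r _ => sq_nonneg r)
  refine ContinuousOn.congr (f := fun r =>
    l2Sq φ / 2 - (∫ x, redF (r ^ 2 * (4 * π * ‖φ x‖ ^ 2))) / (8 * π * r ^ 2)) ?_
    fun r hr => Pmu_dilate (ne_of_gt hr)
  exact continuousOn_const.sub (hJ.div (by fun_prop) fun r hr => by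
    have : 0 < r := hr
    positivity)

lemma continuousOn_Imu_dilate (hφ : Differentiable ℝ φ) (hexp : ExpIntegrable φ) :
    ContinuousOn (fun r => Imu 1 (dilate r φ)) (Ioi 0) := by
  have hJ := ((hexp.hasExpMoments hφ.continuous).continuousOn_integral_comp_mul continuous_redH
    (fun _ => abs_redH_le) two_pos).comp ((continuous_pow 2).continuousOn (s := Ioi 0))
    (fun r _ => sq_nonneg r)
  refine ContinuousOn.congr (f := fun r =>
    r ^ 2 * gradSq φ - (∫ x, redH (r ^ 2 * (4 * π * ‖φ x‖ ^ 2))) / (4 * π * r ^ 2)) ?_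
    fun r hr => Imu_dilate hφ (ne_of_gt hr)
  exact (by fun_prop : Continuous fun r : ℝ => r ^ 2 * gradSq φ).continuousOn.sub
    (hJ.div (by fun_prop) fun r hr => by
      have : 0 < r := hr
      positivity)

end Scaling

lemma gradSq_nonneg (u : E2 → ℂ) : 0 ≤ gradSq u :=
  integral_nonneg fun _ => by positivity

lemma Pmu_le_Smu (μ : ℝ) (u : E2 → ℂ) : Pmu μ u ≤ Smu μ u := by
  have := gradSq_nonneg u
  simp only [Pmu, Smu, Emu]
  linarith

section Minimization

variable {φ : E2 → ℂ} {m : ℝ}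

lemma Imu_nonneg_of_Pmu_nonneg (hφ : MemH1 φ) (hexp : ExpIntegrable φ)
    (hφ0 : ¬φ =ᵐ[volume] 0)
    (hm : ∀ ψ, MemH1 ψ → ExpIntegrable ψ → ¬ψ =ᵐ[volume] 0 → Pmu 1 ψ = 0 → m ≤ Smu 1 ψ)
    (hS : Smu 1 φ < m) (hP : 0 ≤ Pmu 1 φ) : 0 ≤ Imu 1 φ := by
  by_contra! hI
  have hdiff := hφ.2.1
  have hS0 : 0 ≤ Smu 1 φ := hP.trans (Pmu_le_Smu 1 φ)
  set R := 1 + 2 * (Smu 1 φ + 1) / -Imu 1 φ with hRdef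
  have hR : 1 ≤ R := le_add_of_nonneg_right (div_nonneg (by linarith) (by linarith))
  have hSR : Smu 1 (dilate R φ) < 0 := by
    have h1 := Smu_dilate_le hdiff hexp hR
    have h2 : (R - 1) * Imu 1 φ = -2 * (Smu 1 φ + 1) := by
      rw [hRdef]; field_simp [hI.ne]; ring
    nlinarith
  obtain ⟨r, ⟨hr1, -⟩, hr⟩ := intermediate_value_Icc' hR
    ((continuousOn_Pmu_dilate hdiff.continuous hexp).mono ((Icc_subset_Ioi_iff hR).2 one_pos))
    (show (0 : ℝ) ∈ Icc _ _ from ⟨(Pmu_le_Smu 1 _).trans hSR.le, by simpa using hP⟩)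
  have hr0 : r ≠ 0 := by positivity
  have hmr := hm _ (memH1_dilate hφ hr0) (expIntegrable_dilate hexp hr0)
    (not_ae_eq_zero_dilate hφ0 hr0) hr
  have hSr := Smu_dilate_le hdiff hexp hr1
  nlinarith [one_le_pow₀ (n := 2) hr1]

lemma two_mul_sub_Smu_le_Imu (hφ : MemH1 φ) (hexp : ExpIntegrable φ)
    (hφ0 : ¬φ =ᵐ[volume] 0)
    (hm : ∀ ψ, MemH1 ψ → ExpIntegrable ψ → ¬ψ =ᵐ[volume] 0 → Imu 1 ψ = 0 → m ≤ Smu 1 ψ)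
    (hI : 0 ≤ Imu 1 φ) (hK : Imu 1 φ < ∫ x, k1 (4 * π * ‖φ x‖ ^ 2)) :
    2 * (m - Smu 1 φ) ≤ Imu 1 φ := by
  have hdiff := hφ.2.1
  have h2 := Imu_dilate_sqrt_two_le hdiff hexp
  have hsqrt : (1 : ℝ) ≤ √2 := Real.one_le_sqrt.2 one_le_two
  obtain ⟨r, ⟨hr1, hr2⟩, hr⟩ := intermediate_value_Icc' hsqrt
    ((continuousOn_Imu_dilate hdiff hexp).mono ((Icc_subset_Ioi_iff hsqrt).2 one_pos))
    (show (0 : ℝ) ∈ Icc _ _ from ⟨by linarith, by simpa using hI⟩)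
  have hr0 : r ≠ 0 := by positivity
  have hmr := hm _ (memH1_dilate hφ hr0) (expIntegrable_dilate hexp hr0)
    (not_ae_eq_zero_dilate hφ0 hr0) hr
  have hSr := Smu_dilate_le hdiff hexp hr1
  have hr2' : r ^ 2 ≤ 2 := (Real.le_sqrt' (by linarith)).1 hr2
  nlinarith

end Minimization

lemma integral_norm_pow_six_le {φ : E2 → ℂ} (hφ : Continuous φ) (hexp : ExpIntegrable φ) :
    (8 * π ^ 2 / 3) * (∫ x, ‖φ x‖ ^ 6) ≤ ∫ x, k1 (4 * π * ‖φ x‖ ^ 2) := by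
  rw [← integral_const_mul]
  refine integral_mono_of_nonneg (.of_forall fun x => by positivity) (integrable_k1 hφ hexp)
    (.of_forall fun x => ?_)
  calc (8 * π ^ 2 / 3) * ‖φ x‖ ^ 6 = (4 * π * ‖φ x‖ ^ 2) ^ 3 / (24 * π) := by
        field_simp; ring
    _ ≤ k1 (4 * π * ‖φ x‖ ^ 2) := cube_div_le_k1 (by positivity)

theorem coercivity_on_Abar_plus_general
    (Q : E2 → ℂ)
    (hPchar : IsLeast {s : ℝ | ∃ ψ : E2 → ℂ, MemH1 ψ ∧ ExpIntegrable ψ ∧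
        ¬ ψ =ᵐ[volume] (0 : E2 → ℂ) ∧ Pmu 1 ψ = 0 ∧ s = Smu 1 ψ} (Smu 1 Q))
    (hIchar : IsLeast {s : ℝ | ∃ ψ : E2 → ℂ, MemH1 ψ ∧ ExpIntegrable ψ ∧
        ¬ ψ =ᵐ[volume] (0 : E2 → ℂ) ∧ Imu 1 ψ = 0 ∧ s = Smu 1 ψ} (Smu 1 Q))
    (φ : E2 → ℂ) (hφmem : MemH1 φ) (hφexp : ExpIntegrable φ)
    (hS : Smu 1 φ < Smu 1 Q) (hP : 0 ≤ Pmu 1 φ) :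
    min (2 * (Smu 1 Q - Smu 1 φ)) (∫ x : E2, k1 (4 * π * ‖φ x‖ ^ 2)) ≤ Imu 1 φ ∧
    (∀ s : ℝ, 0 ≤ s → s ^ 3 / (24 * π) ≤ k1 s) ∧
    (8 * π ^ 2 / 3) * (∫ x : E2, ‖φ x‖ ^ 6) ≤ ∫ x : E2, k1 (4 * π * ‖φ x‖ ^ 2) := by
  have hφ := hφmem.2.1.continuous
  refine ⟨?_, fun s => cube_div_le_k1, integral_norm_pow_six_le hφ hφexp⟩
  by_cases hφ0 : φ =ᵐ[volume] 0
  · obtain rfl : φ = 0 := (hφ.ae_eq_iff_eq volume continuous_const).1 hφ0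
    exact (min_le_right _ _).trans (by simp [Imu, gradSq, nlDensity, Fmu, k1])
  have hI := Imu_nonneg_of_Pmu_nonneg hφmem hφexp hφ0
    (fun ψ h₁ h₂ h₃ h₄ => hPchar.2 ⟨ψ, h₁, h₂, h₃, h₄, rfl⟩) hS hP
  rcases le_or_gt (∫ x, k1 (4 * π * ‖φ x‖ ^ 2)) (Imu 1 φ) with hK | hK
  · exact (min_le_right _ _).trans hK
  · exact (min_le_left _ _).trans (two_mul_sub_Smu_le_Imu hφmem hφexp hφ0
      (fun ψ h₁ h₂ h₃ h₄ => hIchar.2 ⟨ψ, h₁, h₂, h₃, h₄, rfl⟩) hI hK)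

/-- coercivity of `I₁` on `𝒜̄⁺₁`:
`I₁(φ) ≥ min{2(S₁(Q₁) - S₁(φ)), ∫ k₁(4π|φ|²)}`, together with the lower bounds
`k₁(s) ≥ s³/(24π)` and `∫ k₁(4π|φ|²) ≥ (8π²/3)‖φ‖⁶_{L⁶}`. -/
theorem coercivity_on_Abar_plus
    (Q : E2 → ℂ) (hQ : IsGroundState 1 Q)
    (hPchar : IsLeast {s : ℝ | ∃ ψ : E2 → ℂ, MemH1 ψ ∧ ExpIntegrable ψ ∧
        ¬ ψ =ᵐ[volume] (0 : E2 → ℂ) ∧ Pmu 1 ψ = 0 ∧ s = Smu 1 ψ} (Smu 1 Q))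
    (hIchar : IsLeast {s : ℝ | ∃ ψ : E2 → ℂ, MemH1 ψ ∧ ExpIntegrable ψ ∧
        ¬ ψ =ᵐ[volume] (0 : E2 → ℂ) ∧ Imu 1 ψ = 0 ∧ s = Smu 1 ψ} (Smu 1 Q))
    (φ : E2 → ℂ) (hφmem : MemH1 φ) (hφexp : ExpIntegrable φ)
    (hS : Smu 1 φ < Smu 1 Q) (hP : 0 ≤ Pmu 1 φ) :
    min (2 * (Smu 1 Q - Smu 1 φ)) (∫ x : E2, k1 (4 * π * ‖φ x‖ ^ 2)) ≤ Imu 1 φ ∧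
    (∀ s : ℝ, 0 ≤ s → s ^ 3 / (24 * π) ≤ k1 s) ∧
    (8 * π ^ 2 / 3) * (∫ x : E2, ‖φ x‖ ^ 6) ≤ ∫ x : E2, k1 (4 * π * ‖φ x‖ ^ 2) :=
  coercivity_on_Abar_plus_general Q hPchar hIchar φ hφmem hφexp hS hP
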